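/- In a proper d-tiling T, two distinct separations that are coplanar (i.e., degenerate in the same dimension i and contained in the same hyperplane H^(i)_x) do not intersect. -/

import Mathlib

/- Common framework: axis-parallel boxes (with extended-real endpoints, to
accommodate the unbounded exterior boxes of `T_ext`), `d`-tilings of the cube
`[-1,1]^d`, the exterior boxes, proper tilings, slices, cuts, sides and
separations. -/

noncomputable section

open Classical

attribute [local instance] Classical.propDecidable

/-- A `d`-box, given by the lower and upper endpoints of its coordinate
intervals (extended reals, so that the unbounded exterior boxes are covered).
The interval in coordinate `i` is `[lo i, hi i]`. -/
structure Box (d : ℕ) where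
  lo : Fin d → EReal
  hi : Fin d → EReal

namespace Box

variable {d : ℕ}

/-- Membership of a (real) point in a box. -/
def mem (B : Box d) (p : Fin d → ℝ) : Prop :=
  ∀ i, B.lo i ≤ (p i : EReal) ∧ (p i : EReal) ≤ B.hi i

/-- The set of real points of a box. -/
def toSet (B : Box d) : Set (Fin d → ℝ) := {p | B.mem p}

/-- The interior of a box (for full-dimensional boxes). -/
def interior (B : Box d) : Set (Fin d → ℝ) :=
  {p | ∀ i, B.lo i < (p i : EReal) ∧ (p i : EReal) < B.hi i}

/-- The dimension of a box: the number of non-degenerate coordinate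
intervals. -/
def dim (B : Box d) : ℕ :=
  (Finset.univ.filter fun i => B.lo i < B.hi i).card

/-- A box is full-dimensional (`d`-dimensional) if all of its coordinate
intervals are non-degenerate. -/
def FullDim (B : Box d) : Prop := ∀ i, B.lo i < B.hi i

end Box

/-- Two boxes intersect when they share a (real) point. -/
def Intersects {d : ℕ} (A B : Box d) : Prop := (A.toSet ∩ B.toSet).Nonempty

/-- The dimension of the intersection `A ∩ B` of two boxes: the number of
coordinates `i` where the interval `A_i ∩ B_i` is non-degenerate. -/
def interDim {d : ℕ} (A B : Box d) : ℕ :=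
  (Finset.univ.filter fun i =>
    max (A.lo i) (B.lo i) < min (A.hi i) (B.hi i)).card

/-- Two intersecting boxes touch in dimension `i` when `A_i ∩ B_i` is
degenerate. -/
def Touch {d : ℕ} (A B : Box d) (i : Fin d) : Prop :=
  Intersects A B ∧ max (A.lo i) (B.lo i) = min (A.hi i) (B.hi i)

/-- The cube `[-1,1]^d`. -/
def cube (d : ℕ) : Set (Fin d → ℝ) := {p | ∀ i, -1 ≤ p i ∧ p i ≤ 1}

/-- A `d`-tiling: a finite collection of full-dimensional `d`-boxes contained
in `[-1,1]^d`, with pairwise disjoint interiors, whose union is `[-1,1]^d`. -/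
def IsTiling {d : ℕ} (𝒯 : Finset (Box d)) : Prop :=
  (∀ B ∈ 𝒯, B.FullDim) ∧
  (∀ B ∈ 𝒯, B.toSet ⊆ cube d) ∧
  (∀ A ∈ 𝒯, ∀ B ∈ 𝒯, A ≠ B → A.interior ∩ B.interior = ∅) ∧
  (∀ p ∈ cube d, ∃ B ∈ 𝒯, B.mem p)

/-- The exterior box `T(i,-)` (for `s = false`) resp. `T(i,+)`
(for `s = true`). -/
def extBox (d : ℕ) (i : Fin d) (s : Bool) : Box d where
  lo j := if j < i then ((-1 : ℝ) : EReal)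
          else if j = i then (if s then ((1 : ℝ) : EReal) else ⊥) else ⊥
  hi j := if j < i then ((1 : ℝ) : EReal)
          else if j = i then (if s then ⊤ else ((-1 : ℝ) : EReal)) else ⊤

/-- The family `T_ext` of the `2d` exterior boxes. -/
def extBoxes (d : ℕ) : Finset (Box d) :=
  (Finset.univ : Finset (Fin d × Bool)).image fun q => extBox d q.1 q.2

/-- The collection `T ∪ T_ext`. -/
def withExt {d : ℕ} (𝒯 : Finset (Box d)) : Finset (Box d) := 𝒯 ∪ extBoxes d

/-- A `d`-tiling is proper when every point of `ℝ^d` belongs to at most `d+1`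
boxes of `T ∪ T_ext`. -/
def Proper {d : ℕ} (𝒯 : Finset (Box d)) : Prop :=
  ∀ p : Fin d → ℝ, ((withExt 𝒯).filter fun B => B.mem p).card ≤ d + 1

/-- The hyperplane `H^(i)_x` is generic w.r.t. `𝒯` when `x` is not an endpoint
of the `i`-th interval of any box of `𝒯`. -/
def Generic {d : ℕ} (𝒯 : Finset (Box d)) (i : Fin d) (x : ℝ) : Prop :=
  ∀ B ∈ 𝒯, (x : EReal) ≠ B.lo i ∧ (x : EReal) ≠ B.hi i

/-- The slice `B|^(i)_x` of a box `B` by the hyperplane `H^(i)_x`, regarded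
as a box of `ℝ^d` by omitting coordinate `i`. -/
def sliceBox {d : ℕ} (B : Box (d + 1)) (i : Fin (d + 1)) : Box d where
  lo j := B.lo (i.succAbove j)
  hi j := B.hi (i.succAbove j)

/-- The slice `T|^(i)_x` of a tiling by the hyperplane `H^(i)_x`. -/
def sliceT {d : ℕ} (𝒯 : Finset (Box (d + 1))) (i : Fin (d + 1)) (x : ℝ) :
    Finset (Box d) :=
  (𝒯.filter fun B => B.lo i ≤ (x : EReal) ∧ (x : EReal) ≤ B.hi i).image
    fun B => sliceBox B i

/-- The box `B|^(i)-_x` (the nontrivial cases: if `B_i^+ < x` it is `B`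
itself, and if `B_i^- < x ≤ B_i^+` the interval `B_i` is replaced by
`[B_i^-, 1]`; the empty case `x ≤ B_i^-` is filtered out in `cutMinus`). -/
def cutMinusBox {d : ℕ} (B : Box d) (i : Fin d) (x : ℝ) : Box d :=
  if B.hi i < (x : EReal) then B
  else ⟨B.lo, Function.update B.hi i ((1 : ℝ) : EReal)⟩

/-- The box `B|^(i)+_x` (the nontrivial cases: if `x < B_i^-` it is `B`
itself, and if `B_i^- ≤ x < B_i^+` the interval `B_i` is replaced by
`[-1, B_i^+]`; the empty case `B_i^+ ≤ x` is filtered out in `cutPlus`). -/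
def cutPlusBox {d : ℕ} (B : Box d) (i : Fin d) (x : ℝ) : Box d :=
  if (x : EReal) < B.lo i then B
  else ⟨Function.update B.lo i ((-1 : ℝ) : EReal), B.hi⟩

/-- The collection `T|^(i)-_x` of nonempty boxes `B|^(i)-_x`, `B ∈ T`. -/
def cutMinus {d : ℕ} (𝒯 : Finset (Box d)) (i : Fin d) (x : ℝ) :
    Finset (Box d) :=
  (𝒯.filter fun B => B.lo i < (x : EReal)).image fun B => cutMinusBox B i x

/-- The collection `T|^(i)+_x` of nonempty boxes `B|^(i)+_x`, `B ∈ T`. -/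
def cutPlus {d : ℕ} (𝒯 : Finset (Box d)) (i : Fin d) (x : ℝ) :
    Finset (Box d) :=
  (𝒯.filter fun B => (x : EReal) < B.hi i).image fun B => cutPlusBox B i x

/-- The side `S(B,i,-)` (for `s = false`) resp. `S(B,i,+)` (for `s = true`)
of a box `B`. -/
def sideBox {d : ℕ} (B : Box d) (i : Fin d) (s : Bool) : Box d where
  lo j := if j = i then (if s then B.hi i else B.lo i) else B.lo j
  hi j := if j = i then (if s then B.hi i else B.lo i) else B.hi j

/-- The set of all sides of boxes of `T ∪ T_ext`. -/
def sides {d : ℕ} (𝒯 : Finset (Box d)) : Finset (Box d) :=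
  ((withExt 𝒯) ×ˢ (Finset.univ : Finset (Fin d × Bool))).image
    fun q => sideBox q.1 q.2.1 q.2.2

/-- Two sides are linked when they intersect on a `(d-1)`-dimensional box. -/
def Linked {d : ℕ} (S S' : Box d) : Prop :=
  Intersects S S' ∧ interDim S S' = d - 1

/-- The linking relation, restricted to the sides of `T ∪ T_ext`. -/
def linkRel {d : ℕ} (𝒯 : Finset (Box d)) (S S' : Box d) : Prop :=
  S ∈ sides 𝒯 ∧ S' ∈ sides 𝒯 ∧ Linked S S'

/-- The `∼`-equivalence class of a side (sides reachable by chains of linked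
sides). -/
def sepClass {d : ℕ} (𝒯 : Finset (Box d)) (S₀ : Box d) : Set (Box d) :=
  {S | Relation.ReflTransGen (linkRel 𝒯) S₀ S}

/-- The separation generated by a side `S₀`: the union of the sides in its
`∼`-equivalence class. -/
def sepSet {d : ℕ} (𝒯 : Finset (Box d)) (S₀ : Box d) : Set (Fin d → ℝ) :=
  ⋃ S ∈ sepClass 𝒯 S₀, S.toSet

/-- `S` is degenerate in dimension `i` with value `x`, i.e. it is contained in
the hyperplane `H^(i)_x`. -/
def DegenAt {d : ℕ} (S : Box d) (i : Fin d) (x : ℝ) : Prop :=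
  S.lo i = (x : EReal) ∧ S.hi i = (x : EReal)

/-- A tiling is in general position when no two distinct separations are
coplanar: any two sides whose separations lie in a common hyperplane
`H^(i)_x` are `∼`-equivalent. -/
def GeneralPosition {d : ℕ} (𝒯 : Finset (Box d)) : Prop :=
  ∀ S₀ ∈ sides 𝒯, ∀ S₁ ∈ sides 𝒯, ∀ (i : Fin d) (x : ℝ),
    DegenAt S₀ i x → DegenAt S₁ i x →
      Relation.ReflTransGen (linkRel 𝒯) S₀ S₁

/-- The dimension of the intersection `⋂_{B ∈ 𝓑} B` of a finite family of
boxes: the number of coordinates where the intersected interval is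
non-degenerate. -/
def interDimAll {d : ℕ} (𝓑 : Finset (Box d)) : ℕ :=
  (Finset.univ.filter fun i =>
    𝓑.sup (fun B => B.lo i) < 𝓑.inf (fun B => B.hi i)).card

/-- The digraph `G(T)`: an arc from `A` to `B` (for distinct `A, B ∈ T`) iff
`B_i^- < A_i^+` for all `i`. -/
def tilingArc {d : ℕ} (𝒯 : Finset (Box d)) (A B : Box d) : Prop :=
  A ∈ 𝒯 ∧ B ∈ 𝒯 ∧ A ≠ B ∧ ∀ i, B.lo i < A.hi i


/-! Two sides of `T ∪ T_ext` in the same hyperplane `H^(i)_x` which meet are `∼`-equivalent; this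
is proved by induction on `d`. Let `B, B'` be their boxes. If `B, B'` overlap in every direction
`l ≠ i`, the sides are linked. Otherwise, if they overlap in some direction `j ≠ i`, slice along a
generic hyperplane `H^(j)_y` crossing both: the slice of a proper tiling is a proper
`(d-1)`-tiling, in which the sliced sides are `∼`-equivalent by induction, and chains of linked
sides lift back. (This needs `-1 < y < 1`, so two exterior boxes are treated apart: their sides in
`H^(i)_{±1}` are all linked to the side of `T(i, ±)` there.) If `B, B'` overlap in no direction
`l ≠ i`, they occupy opposite orthants at a common point `p`. A box containing `p` occupies `2 ^ k`
of the `2 ^ d` orthants at `p`, `k` being the number of directions in which `p` is interior to it;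
as at most `d + 1` boxes contain `p`, binary arithmetic forces a box occupying a half-space bounded
by `H^(i)_x`, and its side links to both sides.

Links preserve the hyperplane of a side, so coplanar separations which meet are equal. -/

open Filter Topology

namespace Multiset

theorem range_succ_eq_zero_cons_map (n : ℕ) : range (n + 1) = 0 ::ₘ (range n).map Nat.succ := by
  show ((List.range (n + 1) : List ℕ) : Multiset ℕ) = _
  rw [List.range_succ_eq_map]
  rfl

theorem exists_eq_map_succ_of_zero_notMem {l : Multiset ℕ} (h : 0 ∉ l) :
    ∃ l' : Multiset ℕ, l = l'.map Nat.succ := by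
  refine ⟨l.map Nat.pred, ?_⟩
  rw [map_map]
  conv_lhs => rw [← map_id l]
  exact map_congr rfl fun e he => (Nat.succ_pred_eq_of_ne_zero (ne_of_mem_of_not_mem he h)).symm

theorem sum_map_two_pow_map_succ (l : Multiset ℕ) :
    ((l.map Nat.succ).map (2 ^ ·)).sum = 2 * (l.map (2 ^ ·)).sum := by
  simp [map_map, pow_succ', sum_map_mul_left]

theorem zero_mem_of_odd_sum_map_two_pow {l : Multiset ℕ} (h : Odd (l.map (2 ^ ·)).sum) :
    0 ∈ l := by
  by_contra h₀
  obtain ⟨l', rfl⟩ := exists_eq_map_succ_of_zero_notMem h₀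
  rw [sum_map_two_pow_map_succ] at h
  exact Nat.not_even_iff_odd.2 h (even_two_mul _)

/-- Here `2 ^ (n + 1) - 2 = 2 + 4 + ⋯ + 2 ^ n`. Summands `1` come in pairs, which could be merged
into fewer summands, so there are none; halving then leaves a summand `1` and the sum
`2 + ⋯ + 2 ^ (n - 1)`. -/
theorem eq_map_succ_range_of_sum_map_two_pow_eq {n : ℕ} {l : Multiset ℕ} (hcard : card l ≤ n)
    (hsum : (l.map (2 ^ ·)).sum = 2 ^ (n + 1) - 2) : l = (range n).map Nat.succ := by
  induction hl : card l using Nat.strong_induction_on generalizing n l with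
  | _ k IH =>
  subst hl
  have hpow : 2 ^ (n + 1) = 2 * 2 ^ n := pow_succ' 2 n
  have hpos : 0 < 2 ^ n := Nat.two_pow_pos n
  by_cases h₀ : 0 ∈ l
  · exfalso
    obtain ⟨l₀, rfl⟩ := exists_cons_of_mem h₀
    simp only [map_cons, sum_cons, pow_zero] at hsum
    obtain ⟨l₁, rfl⟩ := exists_cons_of_mem (zero_mem_of_odd_sum_map_two_pow (l := l₀)
      (Nat.odd_iff.2 (by omega)))
    simp only [card_cons, map_cons, sum_cons, pow_zero] at hcard hsum IH
    have := congrArg card (IH (card l₁ + 1) (by omega) (n := n) (l := 1 ::ₘ l₁)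
      (by simp only [card_cons]; omega) (by simp only [map_cons, sum_cons]; omega) (by simp))
    simp only [card_cons, card_map, card_range] at this
    omega
  · obtain ⟨l', rfl⟩ := exists_eq_map_succ_of_zero_notMem h₀
    rw [sum_map_two_pow_map_succ] at hsum
    cases n with
    | zero => simp_all
    | succ m =>
      rw [pow_succ'] at hpow
      obtain ⟨l'', rfl⟩ := exists_cons_of_mem (zero_mem_of_odd_sum_map_two_pow (l := l')
        (Nat.odd_iff.2 (by omega)))
      simp only [map_cons, card_cons, sum_cons, pow_zero, card_map] at hsum hcard IH
      rw [IH (card l'') (by omega) (n := m) (by omega) (by omega) rfl,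
        range_succ_eq_zero_cons_map, map_cons]

end Multiset

namespace Box

variable {d : ℕ}

@[ext]
theorem ext {A B : Box d} (hlo : A.lo = B.lo) (hhi : A.hi = B.hi) : A = B := by
  cases A; cases B; cases hlo; cases hhi; rfl

theorem isClosed_toSet (B : Box d) : IsClosed B.toSet := by
  simp only [toSet, mem, Set.ofPred_forall, Set.ofPred_and]
  exact isClosed_iInter fun l =>
    (isClosed_le continuous_const (continuous_coe_real_ereal.comp (continuous_apply l))).inter
      (isClosed_le (continuous_coe_real_ereal.comp (continuous_apply l)) continuous_const)

theorem mem_of_mem_interior {B : Box d} {p : Fin d → ℝ} (h : p ∈ B.interior) : B.mem p :=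
  fun l => ⟨(h l).1.le, (h l).2.le⟩

theorem FullDim.interior_nonempty {B : Box d} (hB : B.FullDim) : B.interior.Nonempty := by
  choose c hc using fun l => EReal.exists_between_coe_real (hB l)
  exact ⟨c, hc⟩

theorem mem_update {B : Box d} {p : Fin d → ℝ} (hp : B.mem p) {l : Fin d} {r : ℝ}
    (hr : B.lo l ≤ r ∧ (r : EReal) ≤ B.hi l) : B.mem (Function.update p l r) := by
  intro m
  rcases eq_or_ne m l with rfl | hm
  · simpa using hr
  · simpa [hm] using hp m

theorem FullDim.coe_le_lo {B : Box d} (hB : B.FullDim) {l : Fin d} {a : ℝ}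
    (h : ∀ p, B.mem p → a ≤ p l) : (a : EReal) ≤ B.lo l := by
  by_contra! hlt
  obtain ⟨r, hr, hra⟩ := EReal.exists_between_coe_real (lt_min (hB l) hlt)
  obtain ⟨c, hc⟩ := hB.interior_nonempty
  have := h _ (mem_update (mem_of_mem_interior hc) ⟨hr.le, (lt_min_iff.1 hra).1.le⟩)
  simp only [Function.update_self] at this
  exact absurd (lt_min_iff.1 hra).2 (by exact_mod_cast this.not_gt)

theorem FullDim.hi_le_coe {B : Box d} (hB : B.FullDim) {l : Fin d} {b : ℝ}
    (h : ∀ p, B.mem p → p l ≤ b) : B.hi l ≤ (b : EReal) := by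
  by_contra! hlt
  obtain ⟨r, hbr, hr⟩ := EReal.exists_between_coe_real (max_lt (hB l) hlt)
  obtain ⟨c, hc⟩ := hB.interior_nonempty
  have := h _ (mem_update (mem_of_mem_interior hc) ⟨(max_lt_iff.1 hbr).1.le, hr.le⟩)
  simp only [Function.update_self] at this
  exact absurd (max_lt_iff.1 hbr).2 (by exact_mod_cast this.not_gt)

def Crosses (B : Box d) (j : Fin d) (y : ℝ) : Prop := B.lo j < y ∧ (y : EReal) < B.hi j

def interiorCoords (B : Box d) (p : Fin d → ℝ) : Finset (Fin d) :=
  Finset.univ.filter fun l => B.Crosses l (p l)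

theorem notMem_interiorCoords {B : Box d} {p : Fin d → ℝ} {l : Fin d}
    (h : (p l : EReal) = B.lo l ∨ (p l : EReal) = B.hi l) : l ∉ B.interiorCoords p := by
  intro hl
  obtain ⟨h₁, h₂⟩ := (Finset.mem_filter.1 hl).2
  rcases h with h | h
  exacts [h₁.ne' h, h₂.ne h]

end Box

open Box

section Overlaps

variable {d : ℕ}

def Overlaps (A B : Box d) (l : Fin d) : Prop := max (A.lo l) (B.lo l) < min (A.hi l) (B.hi l)

def AbutsAt (A B : Box d) (p : Fin d → ℝ) (l : Fin d) : Prop :=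
  ((p l : EReal) = A.hi l ∧ (p l : EReal) = B.lo l) ∨
    ((p l : EReal) = A.lo l ∧ (p l : EReal) = B.hi l)

theorem interDim_eq_card_filter_overlaps (A B : Box d) :
    interDim A B = (Finset.univ.filter (Overlaps A B)).card := rfl

theorem Overlaps.symm {A B : Box d} {l : Fin d} (h : Overlaps A B l) : Overlaps B A l := by
  rwa [Overlaps, max_comm, min_comm]

theorem overlaps_of_le {A B : Box d} {l : Fin d} (hlo : A.lo l ≤ B.lo l) (hhi : B.hi l ≤ A.hi l)
    (hB : B.lo l < B.hi l) : Overlaps A B l := by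
  rwa [Overlaps, max_eq_right hlo, min_eq_right hhi]

theorem overlaps_of_mem_of_mem_interiorCoords {A B : Box d} (hA : A.FullDim) {p : Fin d → ℝ}
    (hpA : A.mem p) {l : Fin d} (hpB : l ∈ B.interiorCoords p) : Overlaps A B l := by
  obtain ⟨hlo, hhi⟩ := (Finset.mem_filter.1 hpB).2
  rcases (hpA l).1.lt_or_eq with h | h
  · exact (max_lt h hlo).trans_le (le_min (hpA l).2 hhi.le)
  · exact (max_le h.le hlo.le).trans_lt (lt_min (h ▸ hA l) hhi)

theorem not_overlaps_of_hi_le_lo_left {A B : Box d} {l : Fin d} (h : A.hi l ≤ A.lo l) :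
    ¬ Overlaps A B l := fun hov =>
  (lt_of_le_of_lt (le_max_left _ _) hov).not_ge (min_le_left _ _ |>.trans h)

theorem not_overlaps_of_hi_le_lo_right {A B : Box d} {l : Fin d} (h : B.hi l ≤ B.lo l) :
    ¬ Overlaps A B l := fun hov =>
  (lt_of_le_of_lt (le_max_right _ _) hov).not_ge (min_le_right _ _ |>.trans h)

theorem inter_interior_nonempty_of_forall_overlaps {A B : Box d}
    (h : ∀ l, Overlaps A B l) : (A.interior ∩ B.interior).Nonempty := by
  choose q hq using fun l => EReal.exists_between_coe_real (h l)
  exact ⟨q, fun l => ⟨(le_max_left _ _).trans_lt (hq l).1, (hq l).2.trans_le (min_le_left _ _)⟩,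
    fun l => ⟨(le_max_right _ _).trans_lt (hq l).1, (hq l).2.trans_le (min_le_right _ _)⟩⟩

theorem abutsAt_of_not_overlaps {A B : Box d} (hA : A.FullDim) (hB : B.FullDim)
    {p : Fin d → ℝ} (hpA : A.mem p) (hpB : B.mem p) {l : Fin d} (h : ¬ Overlaps A B l) :
    AbutsAt A B p l := by
  have hmax : max (A.lo l) (B.lo l) = p l :=
    le_antisymm (max_le (hpA l).1 (hpB l).1)
      ((le_min (hpA l).2 (hpB l).2).trans (not_lt.1 h))
  have hmin : min (A.hi l) (B.hi l) = p l :=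
    le_antisymm ((not_lt.1 h).trans hmax.le) (le_min (hpA l).2 (hpB l).2)
  have := hA l
  have := hB l
  rcases max_choice (A.lo l) (B.lo l) with h₁ | h₁ <;>
    rcases min_choice (A.hi l) (B.hi l) with h₂ | h₂ <;>
      rw [h₁] at hmax <;> rw [h₂] at hmin <;> simp_all [AbutsAt]

namespace AbutsAt

variable {A B : Box d} {p : Fin d → ℝ} {l : Fin d}

theorem notMem_interiorCoords_left (h : AbutsAt A B p l) : l ∉ A.interiorCoords p :=
  notMem_interiorCoords (h.imp (·.1) (·.1)).symm

theorem notMem_interiorCoords_right (h : AbutsAt A B p l) : l ∉ B.interiorCoords p :=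
  notMem_interiorCoords (h.imp (·.2) (·.2))

theorem ne (hA : A.FullDim) (h : AbutsAt A B p l) : A ≠ B := by
  rintro rfl
  rcases h with ⟨h₁, h₂⟩ | ⟨h₁, h₂⟩
  exacts [(hA l).ne (h₂.symm.trans h₁), (hA l).ne (h₁.symm.trans h₂)]

end AbutsAt

theorem not_abutsAt_of_abutsAt {E B B' : Box d} (hE : E.FullDim) (hB : B.FullDim)
    (hB' : B'.FullDim) {p : Fin d → ℝ} {l : Fin d} (h : AbutsAt E B p l) (h' : AbutsAt E B' p l) :
    ¬ AbutsAt B B' p l := by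
  have := hE l
  have := hB l
  have := hB' l
  unfold AbutsAt at *
  rcases h with ⟨h₁, h₂⟩ | ⟨h₁, h₂⟩ <;> rcases h' with ⟨h₃, h₄⟩ | ⟨h₃, h₄⟩ <;>
    rintro (⟨h₅, h₆⟩ | ⟨h₅, h₆⟩) <;> simp_all

end Overlaps

section Exterior

variable {d : ℕ}

@[simp]
theorem extBox_lo_of_lt {i j : Fin d} (h : j < i) (s : Bool) :
    (extBox d i s).lo j = ((-1 : ℝ) : EReal) := if_pos h

@[simp]
theorem extBox_hi_of_lt {i j : Fin d} (h : j < i) (s : Bool) :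
    (extBox d i s).hi j = ((1 : ℝ) : EReal) := if_pos h

@[simp]
theorem extBox_lo_self (i : Fin d) (s : Bool) :
    (extBox d i s).lo i = if s then ((1 : ℝ) : EReal) else ⊥ := by
  simp [extBox]

@[simp]
theorem extBox_hi_self (i : Fin d) (s : Bool) :
    (extBox d i s).hi i = if s then ⊤ else ((-1 : ℝ) : EReal) := by
  simp [extBox]

@[simp]
theorem extBox_lo_of_gt {i j : Fin d} (h : i < j) (s : Bool) : (extBox d i s).lo j = ⊥ := by
  simp [extBox, h.not_gt, h.ne']

@[simp]
theorem extBox_hi_of_gt {i j : Fin d} (h : i < j) (s : Bool) : (extBox d i s).hi j = ⊤ := by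
  simp [extBox, h.not_gt, h.ne']

theorem extBox_fullDim (i : Fin d) (s : Bool) : (extBox d i s).FullDim := by
  intro j
  rcases lt_trichotomy j i with h | rfl | h
  · rw [extBox_lo_of_lt h, extBox_hi_of_lt h]
    exact EReal.coe_lt_coe_iff.2 (by norm_num)
  · rw [extBox_lo_self, extBox_hi_self]
    cases s
    exacts [EReal.bot_lt_coe _, EReal.coe_lt_top _]
  · rw [extBox_lo_of_gt h, extBox_hi_of_gt h]
    exact bot_lt_top

theorem mem_extBox_iff {i : Fin d} {s : Bool} {p : Fin d → ℝ} :
    (extBox d i s).mem p ↔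
      (∀ j < i, -1 ≤ p j ∧ p j ≤ 1) ∧ if s then 1 ≤ p i else p i ≤ -1 := by
  refine ⟨fun h => ⟨fun j hj => ?_, ?_⟩, fun ⟨h, hi⟩ j => ?_⟩
  · have := h j
    rw [extBox_lo_of_lt hj, extBox_hi_of_lt hj] at this
    exact_mod_cast this
  · have := h i
    rw [extBox_lo_self, extBox_hi_self] at this
    cases s <;> simp only [Bool.false_eq_true, ↓reduceIte] at this ⊢
    · exact_mod_cast this.2
    · exact_mod_cast this.1
  · rcases lt_trichotomy j i with hj | rfl | hj
    · rw [extBox_lo_of_lt hj, extBox_hi_of_lt hj]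
      exact_mod_cast h j hj
    · rw [extBox_lo_self, extBox_hi_self]
      cases s <;> simp only [Bool.false_eq_true, ↓reduceIte] at hi ⊢
      · exact ⟨bot_le, by exact_mod_cast hi⟩
      · exact ⟨by exact_mod_cast hi, le_top⟩
    · rw [extBox_lo_of_gt hj, extBox_hi_of_gt hj]
      exact ⟨bot_le, le_top⟩

theorem mem_interior_extBox {i : Fin d} {s : Bool} {p : Fin d → ℝ}
    (h : p ∈ (extBox d i s).interior) :
    (∀ j < i, -1 < p j ∧ p j < 1) ∧ if s then 1 < p i else p i < -1 := by
  refine ⟨fun j hj => ?_, ?_⟩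
  · have := h j
    rw [extBox_lo_of_lt hj, extBox_hi_of_lt hj] at this
    exact_mod_cast this
  · have := h i
    rw [extBox_lo_self, extBox_hi_self] at this
    cases s <;> simp only [Bool.false_eq_true, ↓reduceIte] at this ⊢
    · exact_mod_cast this.2
    · exact_mod_cast this.1

theorem eq_decide_of_mem_extBox {i : Fin d} {s : Bool} {p : Fin d → ℝ}
    (h : (extBox d i s).mem p) : s = decide (0 < p i) := by
  have := (mem_extBox_iff.1 h).2
  cases s <;> simp only [Bool.false_eq_true, ↓reduceIte] at this
  · exact (decide_eq_false (by linarith)).symm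
  · exact (decide_eq_true (by linarith)).symm

theorem mem_extBoxes {B : Box d} : B ∈ extBoxes d ↔ ∃ i s, B = extBox d i s := by
  simp [extBoxes, eq_comm]

theorem extBox_mem_withExt (𝒯 : Finset (Box d)) (i : Fin d) (s : Bool) :
    extBox d i s ∈ withExt 𝒯 :=
  Finset.mem_union_right _ (mem_extBoxes.2 ⟨i, s, rfl⟩)

end Exterior

namespace IsTiling

variable {d : ℕ} {𝒯 : Finset (Box d)}

theorem fullDim (hT : IsTiling 𝒯) {B : Box d} (hB : B ∈ withExt 𝒯) : B.FullDim := by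
  rcases Finset.mem_union.1 hB with hB | hB
  · exact hT.1 B hB
  · obtain ⟨i, s, rfl⟩ := mem_extBoxes.1 hB
    exact extBox_fullDim i s

theorem neg_one_le_lo (hT : IsTiling 𝒯) {B : Box d} (hB : B ∈ 𝒯) (l : Fin d) :
    ((-1 : ℝ) : EReal) ≤ B.lo l :=
  (hT.1 B hB).coe_le_lo fun _ hp => (hT.2.1 B hB hp l).1

theorem hi_le_one (hT : IsTiling 𝒯) {B : Box d} (hB : B ∈ 𝒯) (l : Fin d) :
    B.hi l ≤ ((1 : ℝ) : EReal) :=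
  (hT.1 B hB).hi_le_coe fun _ hp => (hT.2.1 B hB hp l).2

theorem exists_mem_withExt (hT : IsTiling 𝒯) (p : Fin d → ℝ) : ∃ B ∈ withExt 𝒯, B.mem p := by
  by_cases hp : p ∈ cube d
  · obtain ⟨B, hB, hpB⟩ := hT.2.2.2 p hp
    exact ⟨B, Finset.mem_union_left _ hB, hpB⟩
  · simp only [cube, Set.mem_ofPred_eq, not_forall] at hp
    obtain ⟨i, hi, hmin⟩ := wellFounded_lt.has_min {l | ¬(-1 ≤ p l ∧ p l ≤ 1)} hp
    refine ⟨extBox d i (decide (0 < p i)), extBox_mem_withExt 𝒯 _ _,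
      mem_extBox_iff.2 ⟨fun j hj => not_not.1 fun h => hmin j h hj, ?_⟩⟩
    simp only [Set.mem_ofPred_eq, not_and_or, not_le] at hi
    split_ifs with h <;> simp only [decide_eq_true_eq, not_lt] at h <;> rcases hi with hi | hi <;>
      linarith

theorem inter_interior_eq_empty (hT : IsTiling 𝒯) {A B : Box d} (hA : A ∈ withExt 𝒯)
    (hB : B ∈ withExt 𝒯) (hAB : A ≠ B) : A.interior ∩ B.interior = ∅ := by
  have hcube : ∀ C ∈ 𝒯, ∀ q ∈ C.interior, ∀ l, -1 ≤ q l ∧ q l ≤ 1 :=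
    fun C hC q hq => hT.2.1 C hC (mem_of_mem_interior hq)
  have houtside : ∀ i s, ∀ q ∈ (extBox d i s).interior, ¬(-1 ≤ q i ∧ q i ≤ 1) := by
    intro i s q hq
    have := (mem_interior_extBox hq).2
    cases s <;> simp only [Bool.false_eq_true, ↓reduceIte] at this <;> intro h <;>
      linarith [h.1, h.2]
  rw [Set.eq_empty_iff_forall_notMem]
  rintro q ⟨hqA, hqB⟩
  rcases Finset.mem_union.1 hA with hA | hA <;> rcases Finset.mem_union.1 hB with hB | hB
  · exact (Set.eq_empty_iff_forall_notMem.1 (hT.2.2.1 A hA B hB hAB)) q ⟨hqA, hqB⟩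
  · obtain ⟨i, s, rfl⟩ := mem_extBoxes.1 hB
    exact houtside i s q hqB (hcube A hA q hqA i)
  · obtain ⟨i, s, rfl⟩ := mem_extBoxes.1 hA
    exact houtside i s q hqA (hcube B hB q hqB i)
  · obtain ⟨i, s, rfl⟩ := mem_extBoxes.1 hA
    obtain ⟨i', s', rfl⟩ := mem_extBoxes.1 hB
    have hA' := mem_interior_extBox hqA
    have hB' := mem_interior_extBox hqB
    rcases lt_trichotomy i i' with h | rfl | h
    · exact houtside i s q hqA ⟨(hB'.1 i h).1.le, (hB'.1 i h).2.le⟩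
    · have hss : s ≠ s' := fun hs => hAB (hs ▸ rfl)
      cases s <;> cases s' <;>
        simp only [ne_eq, not_true_eq_false, not_false_eq_true, Bool.false_eq_true,
          Bool.true_eq_false, ↓reduceIte] at hss hA' hB' <;>
        linarith [hA'.2, hB'.2]
    · exact houtside i' s' q hqB ⟨(hA'.1 i' h).1.le, (hA'.1 i' h).2.le⟩

theorem exists_abutsAt (hT : IsTiling 𝒯) {A B : Box d} (hA : A ∈ withExt 𝒯)
    (hB : B ∈ withExt 𝒯) (hAB : A ≠ B) {p : Fin d → ℝ} (hpA : A.mem p) (hpB : B.mem p) :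
    ∃ l, AbutsAt A B p l := by
  by_contra! h
  have hov : ∀ l, Overlaps A B l := fun l => not_not.1 fun hl =>
    h l (abutsAt_of_not_overlaps (hT.fullDim hA) (hT.fullDim hB) hpA hpB hl)
  exact (inter_interior_nonempty_of_forall_overlaps hov).ne_empty
    (hT.inter_interior_eq_empty hA hB hAB)

end IsTiling

namespace Box

variable {d : ℕ}

/-- For `B.mem p`: the signs in coordinate `l` (`true` for the positive direction) of the
orthants at `p` into which `B` extends from `p`. -/
def orthantSigns (B : Box d) (p : Fin d → ℝ) (l : Fin d) : Finset Bool :=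
  if B.Crosses l (p l) then Finset.univ else {decide ((p l : EReal) = B.lo l)}

def orthants (B : Box d) (p : Fin d → ℝ) : Finset (Fin d → Bool) :=
  Fintype.piFinset (B.orthantSigns p)

theorem card_orthants (B : Box d) (p : Fin d → ℝ) :
    (B.orthants p).card = 2 ^ (B.interiorCoords p).card := by
  rw [orthants, Fintype.card_piFinset, interiorCoords, ← Finset.prod_const, Finset.prod_filter]
  refine Finset.prod_congr rfl fun l _ => ?_
  unfold orthantSigns
  split_ifs <;> simp

end Box

namespace IsTiling

variable {d : ℕ} {𝒯 : Finset (Box d)}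

theorem exists_mem_and_mem_add_smul (hT : IsTiling 𝒯) (e v : Fin d → ℝ) :
    ∃ B ∈ withExt 𝒯, B.mem e ∧ ∃ t : ℝ, 0 < t ∧ B.mem (e + t • v) := by
  have hfreq : ∃ᶠ t in 𝓝[>] (0 : ℝ), ∃ B ∈ withExt 𝒯, B.mem (e + t • v) :=
    Frequently.of_forall fun t => hT.exists_mem_withExt _
  obtain ⟨B, hB, hBfreq⟩ := (Finset.frequently_exists _).1 hfreq
  have hlim : Tendsto (fun t : ℝ => e + t • v) (𝓝[>] 0) (𝓝 e) := by
    have hcont : Continuous fun t : ℝ => e + t • v := by fun_prop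
    simpa using (hcont.tendsto 0).mono_left nhdsWithin_le_nhds
  exact ⟨B, hB, B.isClosed_toSet.mem_of_frequently_of_tendsto hBfreq hlim,
    (hBfreq.and_eventually self_mem_nhdsWithin).exists.imp fun t ht => ⟨ht.2, ht.1⟩⟩

theorem exists_mem_orthants (hT : IsTiling 𝒯) (p : Fin d → ℝ) (τ : Fin d → Bool) :
    ∃ B ∈ withExt 𝒯, B.mem p ∧ τ ∈ B.orthants p := by
  obtain ⟨B, hB, hpB, t, ht, hBt⟩ :=
    hT.exists_mem_and_mem_add_smul p fun l => if τ l then 1 else -1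
  refine ⟨B, hB, hpB, Fintype.mem_piFinset.2 fun l => ?_⟩
  unfold orthantSigns
  split_ifs with hint
  · exact Finset.mem_univ _
  have hcoord := hBt l
  simp only [Pi.add_apply, Pi.smul_apply, smul_eq_mul] at hcoord
  rw [Finset.mem_singleton]
  by_cases hl : (p l : EReal) = B.lo l
  · have hle : p l ≤ p l + t * (if τ l then 1 else -1) := by exact_mod_cast hl ▸ hcoord.1
    rw [decide_eq_true hl]
    cases hτ : τ l
    · simp only [hτ, Bool.false_eq_true, ↓reduceIte] at hle
      linarith
    · rfl
  · have hhi : (p l : EReal) = B.hi l :=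
      le_antisymm (hpB l).2 (not_lt.1 fun h => hint ⟨(hpB l).1.lt_of_ne (Ne.symm hl), h⟩)
    have hle : p l + t * (if τ l then 1 else -1) ≤ p l := by exact_mod_cast hhi ▸ hcoord.2
    rw [decide_eq_false hl]
    cases hτ : τ l
    · rfl
    · simp only [hτ, ↓reduceIte] at hle
      linarith

theorem disjoint_orthants (hT : IsTiling 𝒯) {A B : Box d} (hA : A ∈ withExt 𝒯)
    (hB : B ∈ withExt 𝒯) (hAB : A ≠ B) {p : Fin d → ℝ} (hpA : A.mem p) (hpB : B.mem p) :
    Disjoint (A.orthants p) (B.orthants p) := by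
  obtain ⟨l, hl⟩ := hT.exists_abutsAt hA hB hAB hpA hpB
  have hsigns : ∀ C : Box d, C.FullDim → ∀ b : Bool,
      (p l : EReal) = (if b then C.lo l else C.hi l) → C.orthantSigns p l = {b} := by
    intro C hC b hb
    have := hC l
    cases b <;> simp only [Bool.false_eq_true, ↓reduceIte] at hb <;>
      simp [orthantSigns, Crosses, hb, this.ne']
  rw [Finset.disjoint_left]
  intro τ hτA hτB
  have hA' := Fintype.mem_piFinset.1 hτA l
  have hB' := Fintype.mem_piFinset.1 hτB l
  rcases hl with ⟨h₁, h₂⟩ | ⟨h₁, h₂⟩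
  · rw [hsigns A (hT.fullDim hA) false h₁, Finset.mem_singleton] at hA'
    rw [hsigns B (hT.fullDim hB) true h₂, Finset.mem_singleton] at hB'
    simp_all
  · rw [hsigns A (hT.fullDim hA) true h₁, Finset.mem_singleton] at hA'
    rw [hsigns B (hT.fullDim hB) false h₂, Finset.mem_singleton] at hB'
    simp_all

theorem sum_two_pow_card_interiorCoords (hT : IsTiling 𝒯) (p : Fin d → ℝ) :
    ∑ B ∈ (withExt 𝒯).filter (·.mem p), 2 ^ (B.interiorCoords p).card = 2 ^ d := by
  have hcover : ((withExt 𝒯).filter (·.mem p)).biUnion (·.orthants p) = Finset.univ :=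
    Finset.eq_univ_of_forall fun τ => by
      obtain ⟨B, hB, hpB, hτ⟩ := hT.exists_mem_orthants p τ
      exact Finset.mem_biUnion.2 ⟨B, Finset.mem_filter.2 ⟨hB, hpB⟩, hτ⟩
  have hdisj :
      Set.PairwiseDisjoint ↑((withExt 𝒯).filter (·.mem p)) fun B : Box d => B.orthants p :=
    fun A hA B hB hAB => hT.disjoint_orthants (Finset.mem_filter.1 hA).1
      (Finset.mem_filter.1 hB).1 hAB (Finset.mem_filter.1 hA).2 (Finset.mem_filter.1 hB).2
  simp_rw [← Box.card_orthants]
  rw [← Finset.card_biUnion hdisj, hcover, Finset.card_univ, Fintype.card_fun, Fintype.card_bool,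
    Fintype.card_fin]


theorem card_filter_mem_le_of_hi_eq_top (hT : IsTiling 𝒯) {u : Fin d → ℝ} {j : Fin d}
    (htop : ∀ B ∈ withExt 𝒯, B.mem u → B.hi j = ⊤) :
    ((withExt 𝒯).filter (·.mem u)).card ≤ d := by
  have hsub : (withExt 𝒯).filter (·.mem u) ⊆
      Finset.univ.image fun k => extBox d k (decide (0 < u k)) := by
    intro B hB
    obtain ⟨hB, huB⟩ := Finset.mem_filter.1 hB
    rcases Finset.mem_union.1 hB with hB | hB
    · have := hT.hi_le_one hB j
      rw [htop B (Finset.mem_union_left _ hB) huB] at this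
      exact absurd (top_le_iff.1 this) (EReal.coe_ne_top 1)
    · obtain ⟨k, s, rfl⟩ := mem_extBoxes.1 hB
      exact Finset.mem_image.2 ⟨k, Finset.mem_univ _, by rw [← eq_decide_of_mem_extBox huB]⟩
  exact (Finset.card_le_card hsub).trans (Finset.card_image_le.trans (by simp))

/-- The direction `v` leaves `W` across its face in `H^(j)_b` and, in the other directions, points
into `W` wherever `u` lies on a face of `W`; so it leaves at once every box abutting `W` at `u`. -/
theorem exists_notMem_update_add_smul (hT : IsTiling 𝒯) {u : Fin d → ℝ} {j : Fin d}
    {W : Box d} (hW : W ∈ withExt 𝒯) (huW : W.mem u) {b : ℝ} (hb : W.hi j = b) :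
    ∃ v : Fin d → ℝ, ∀ t : ℝ, 0 < t → ∀ B ∈ withExt 𝒯, B.mem u → B.Crosses j (u j) →
      ¬ B.mem (Function.update u j b + t • v) := by
  refine ⟨fun l => if l = j ∨ (u l : EReal) = W.lo l then 1 else -1,
    fun t ht B hB huB hBj hBt => ?_⟩
  by_cases hBW : B = W
  · subst hBW
    have := (hBt j).2
    simp only [Pi.add_apply, Pi.smul_apply, smul_eq_mul, Function.update_self, true_or,
      ↓reduceIte, mul_one, hb, EReal.coe_le_coe_iff] at this
    linarith
  obtain ⟨l, hl⟩ := hT.exists_abutsAt hB hW hBW huB huW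
  have hlj : l ≠ j := by
    rintro rfl
    rcases hl with ⟨h, -⟩ | ⟨h, -⟩
    exacts [hBj.2.ne h, hBj.1.ne' h]
  have hBtl := hBt l
  simp only [Pi.add_apply, Pi.smul_apply, smul_eq_mul, Function.update_of_ne hlj, hlj,
    false_or] at hBtl
  rcases hl with ⟨h₁, h₂⟩ | ⟨h₁, h₂⟩
  · rw [if_pos h₂, ← h₁] at hBtl
    have : u l + t * 1 ≤ u l := by exact_mod_cast hBtl.2
    linarith
  · rw [if_neg fun h => (hT.fullDim hW l).ne (h.symm.trans h₂), ← h₁] at hBtl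
    have : u l ≤ u l + t * -1 := by exact_mod_cast hBtl.1
    linarith

end IsTiling

namespace Proper

variable {d : ℕ} {𝒯 : Finset (Box d)}

/-- Pushing `u` in direction `j` onto the nearest upper face `H^(j)_b` of a box containing `u`
keeps all boxes containing `u`, and a ray leaving them all from there meets one more box. -/
theorem card_filter_mem_le_of_forall_crosses (hT : IsTiling 𝒯) (hP : Proper 𝒯)
    (u : Fin d → ℝ) (j : Fin d) (hcross : ∀ B ∈ withExt 𝒯, B.mem u → B.Crosses j (u j)) :
    ((withExt 𝒯).filter (·.mem u)).card ≤ d := by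
  set F := (withExt 𝒯).filter (·.mem u)
  by_cases htop : ∀ B ∈ withExt 𝒯, B.mem u → B.hi j = ⊤
  · exact hT.card_filter_mem_le_of_hi_eq_top htop
  push Not at htop
  obtain ⟨B₀, hB₀, huB₀, hB₀top⟩ := htop
  obtain ⟨W, hWF, hWmin⟩ :=
    F.exists_min_image (fun B => B.hi j) ⟨B₀, Finset.mem_filter.2 ⟨hB₀, huB₀⟩⟩
  obtain ⟨hW, huW⟩ := Finset.mem_filter.1 hWF
  obtain ⟨b, hb⟩ : ∃ b : ℝ, W.hi j = b :=
    ⟨(W.hi j).toReal, (EReal.coe_toReal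
      (ne_top_of_le_ne_top hB₀top (hWmin B₀ (Finset.mem_filter.2 ⟨hB₀, huB₀⟩)))
      (ne_bot_of_gt (hcross W hW huW).2)).symm⟩
  have hub : u j < b := by exact_mod_cast hb ▸ (hcross W hW huW).2
  have he : ∀ B ∈ F, B.mem (Function.update u j b) := fun B hB => by
    obtain ⟨hB, huB⟩ := Finset.mem_filter.1 hB
    refine mem_update huB ⟨(hcross B hB huB).1.le.trans (by exact_mod_cast hub.le), ?_⟩
    exact hb ▸ hWmin B (Finset.mem_filter.2 ⟨hB, huB⟩)
  obtain ⟨v, hv⟩ := hT.exists_notMem_update_add_smul hW huW hb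
  obtain ⟨B', hB', heB', t, ht, hB't⟩ :=
    hT.exists_mem_and_mem_add_smul (Function.update u j b) v
  have hB'F : B' ∉ F := fun h => by
    obtain ⟨hB'', huB'⟩ := Finset.mem_filter.1 h
    exact hv t ht B' hB'' huB' (hcross B' hB'' huB') hB't
  have hsub : insert B' F ⊆ (withExt 𝒯).filter (·.mem (Function.update u j b)) :=
    Finset.insert_subset (Finset.mem_filter.2 ⟨hB', heB'⟩) fun B hB =>
      Finset.mem_filter.2 ⟨(Finset.mem_filter.1 hB).1, he B hB⟩
  have := (Finset.card_le_card hsub).trans (hP _)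
  rw [Finset.card_insert_of_notMem hB'F] at this
  omega

end Proper

theorem IsTiling.forall_mem_interiorCoords_of_card_eq {n : ℕ} {𝒯 : Finset (Box (n + 1))}
    (hT : IsTiling 𝒯) {p : Fin (n + 1) → ℝ} {i : Fin (n + 1)} {E B B' : Box (n + 1)}
    (hE : E ∈ withExt 𝒯) (hB : B ∈ withExt 𝒯) (hB' : B' ∈ withExt 𝒯) (hEB : E ≠ B)
    (hEB' : E ≠ B') (hpE : E.mem p) (hpB : B.mem p) (hpB' : B'.mem p)
    (hcard : (E.interiorCoords p).card = n) (habut : ∀ l ≠ i, AbutsAt B B' p l) :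
    ∀ l ≠ i, l ∈ E.interiorCoords p := by
  have hcompl : ∀ l l', l ∉ E.interiorCoords p → l' ∉ E.interiorCoords p → l = l' := by
    have : (E.interiorCoords p)ᶜ.card ≤ 1 := by simp [Finset.card_compl, hcard]
    exact fun l l' hl hl' => Finset.card_le_one.1 this l (by simpa) l' (by simpa)
  obtain ⟨l₁, hl₁⟩ := hT.exists_abutsAt hE hB hEB hpE hpB
  obtain ⟨l₂, hl₂⟩ := hT.exists_abutsAt hE hB' hEB' hpE hpB'
  obtain rfl := hcompl l₁ l₂ hl₁.notMem_interiorCoords_left hl₂.notMem_interiorCoords_left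
  have hl₁i : l₁ = i := not_not.1 fun h =>
    not_abutsAt_of_abutsAt (hT.fullDim hE) (hT.fullDim hB) (hT.fullDim hB') hl₁ hl₂ (habut l₁ h)
  exact fun l hl => not_not.1 fun h => hl (hl₁i ▸ hcompl l l₁ h hl₁.notMem_interiorCoords_left)

/-- `B` and `B'` take up one orthant at `p` each, so by
`Multiset.eq_map_succ_range_of_sum_map_two_pow_eq` the at most `n + 1` other boxes at `p` take up
`2, 4, …, 2 ^ (n + 1)` of the `2 ^ (n + 2)` orthants. -/
theorem Proper.exists_card_interiorCoords_eq {n : ℕ} {𝒯 : Finset (Box (n + 2))}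
    (hT : IsTiling 𝒯) (hP : Proper 𝒯) {p : Fin (n + 2) → ℝ} {B B' : Box (n + 2)}
    (hB : B ∈ withExt 𝒯) (hB' : B' ∈ withExt 𝒯) (hBB' : B ≠ B') (hpB : B.mem p) (hpB' : B'.mem p)
    (hvB : B.interiorCoords p = ∅) (hvB' : B'.interiorCoords p = ∅) :
    ∃ E ∈ withExt 𝒯, E.mem p ∧ E ≠ B ∧ E ≠ B' ∧ (E.interiorCoords p).card = n + 1 := by
  set F := (withExt 𝒯).filter (·.mem p)
  have hBF : B ∈ F := Finset.mem_filter.2 ⟨hB, hpB⟩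
  have hB'F : B' ∈ F.erase B := Finset.mem_erase.2 ⟨hBB'.symm, Finset.mem_filter.2 ⟨hB', hpB'⟩⟩
  have hsum : ∑ E ∈ (F.erase B).erase B', 2 ^ (E.interiorCoords p).card = 2 ^ (n + 2) - 2 := by
    have : ∑ E ∈ F, 2 ^ (E.interiorCoords p).card = 2 ^ (n + 2) :=
      hT.sum_two_pow_card_interiorCoords p
    rw [← Finset.add_sum_erase _ _ hBF, ← Finset.add_sum_erase _ _ hB'F, hvB, hvB'] at this
    simp only [Finset.card_empty, pow_zero] at this
    omega
  have hcard : ((F.erase B).erase B').card ≤ n + 1 := by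
    have : F.card ≤ n + 2 + 1 := hP p
    rw [Finset.card_erase_of_mem hB'F, Finset.card_erase_of_mem hBF]
    omega
  have hsplit := Multiset.eq_map_succ_range_of_sum_map_two_pow_eq (n := n + 1)
    (l := ((F.erase B).erase B').val.map fun E => (E.interiorCoords p).card)
    (by rw [Multiset.card_map]; exact hcard) (by rw [Multiset.map_map]; exact hsum)
  obtain ⟨E, hEF', hE⟩ := Multiset.mem_map.1 (hsplit ▸ (by simp) :
    n + 1 ∈ ((F.erase B).erase B').val.map fun E => (E.interiorCoords p).card)
  obtain ⟨hEB', hEF'⟩ := Finset.mem_erase.1 hEF'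
  obtain ⟨hEB, hEF⟩ := Finset.mem_erase.1 hEF'
  obtain ⟨hE', hpE⟩ := Finset.mem_filter.1 hEF
  exact ⟨E, hE', hpE, hEB, hEB', hE⟩

theorem Proper.exists_mem_interiorCoords_of_abutsAt {d : ℕ} {𝒯 : Finset (Box d)}
    (hT : IsTiling 𝒯) (hP : Proper 𝒯) {p : Fin d → ℝ} {i : Fin d} {B B' : Box d}
    (hB : B ∈ withExt 𝒯) (hB' : B' ∈ withExt 𝒯) (hBB' : B ≠ B') (hpB : B.mem p)
    (hpB' : B'.mem p) (hiB : (p i : EReal) = B.lo i ∨ (p i : EReal) = B.hi i)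
    (hiB' : (p i : EReal) = B'.lo i ∨ (p i : EReal) = B'.hi i)
    (habut : ∀ l ≠ i, AbutsAt B B' p l) :
    ∃ N ∈ withExt 𝒯, N.mem p ∧ ∀ l ≠ i, l ∈ N.interiorCoords p := by
  obtain ⟨n, rfl⟩ : ∃ n, d = n + 1 := Nat.exists_eq_add_one.2 i.pos
  cases n with
  | zero => exact ⟨B, hB, hpB, fun l hl => absurd (Fin.ext (by omega)) hl⟩
  | succ n =>
  have hvB : B.interiorCoords p = ∅ := Finset.eq_empty_of_forall_notMem fun l => by
    rcases eq_or_ne l i with rfl | hl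
    exacts [notMem_interiorCoords hiB, (habut l hl).notMem_interiorCoords_left]
  have hvB' : B'.interiorCoords p = ∅ := Finset.eq_empty_of_forall_notMem fun l => by
    rcases eq_or_ne l i with rfl | hl
    exacts [notMem_interiorCoords hiB', (habut l hl).notMem_interiorCoords_right]
  obtain ⟨E, hE, hpE, hEB, hEB', hcard⟩ :=
    hP.exists_card_interiorCoords_eq hT hB hB' hBB' hpB hpB' hvB hvB'
  exact ⟨E, hE, hpE,
    hT.forall_mem_interiorCoords_of_card_eq hE hB hB' hEB hEB' hpE hpB hpB' hcard habut⟩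

section Slice

variable {d : ℕ}

theorem mem_insertNth_iff {B : Box (d + 1)} {j : Fin (d + 1)} {y : ℝ} {v : Fin d → ℝ} :
    B.mem (j.insertNth y v) ↔
      (B.lo j ≤ y ∧ (y : EReal) ≤ B.hi j) ∧ (sliceBox B j).mem v := by
  simp only [Box.mem, Fin.forall_iff_succAbove j, Fin.insertNth_apply_same,
    Fin.insertNth_apply_succAbove, sliceBox]

theorem insertNth_mem_interior_iff {B : Box (d + 1)} {j : Fin (d + 1)} {y : ℝ}
    {v : Fin d → ℝ} :
    j.insertNth y v ∈ B.interior ↔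
      B.Crosses j y ∧ v ∈ (sliceBox B j).interior := by
  simp only [Box.interior, Box.Crosses, Set.mem_ofPred_eq, Fin.forall_iff_succAbove j,
    Fin.insertNth_apply_same, Fin.insertNth_apply_succAbove, sliceBox]

theorem Box.FullDim.sliceBox {B : Box (d + 1)} (hB : B.FullDim) (j : Fin (d + 1)) :
    (sliceBox B j).FullDim :=
  fun l => hB (j.succAbove l)

theorem sliceBox_extBox (j : Fin (d + 1)) (k : Fin d) (s : Bool) :
    sliceBox (extBox (d + 1) (j.succAbove k) s) j = extBox d k s := by
  ext l <;> simp [sliceBox, extBox, Fin.succAbove_lt_succAbove_iff]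

theorem Generic.crosses {𝒮 : Finset (Box d)} {j : Fin d} {y : ℝ} (hgen : Generic 𝒮 j y)
    {B : Box d} (hB : B ∈ 𝒮) (h : B.lo j ≤ y ∧ (y : EReal) ≤ B.hi j) :
    B.Crosses j y :=
  ⟨h.1.lt_of_ne (hgen B hB).1.symm, h.2.lt_of_ne (hgen B hB).2⟩

theorem Generic.withExt {𝒯 : Finset (Box d)} {j : Fin d} {y : ℝ} (hgen : Generic 𝒯 j y)
    (hy₁ : -1 < y) (hy₂ : y < 1) : Generic (withExt 𝒯) j y := by
  intro B hB
  rcases Finset.mem_union.1 hB with hB | hB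
  · exact hgen B hB
  obtain ⟨κ, s, rfl⟩ := mem_extBoxes.1 hB
  have h₁ : (y : EReal) ≠ ((1 : ℝ) : EReal) := by exact_mod_cast hy₂.ne
  have h₂ : (y : EReal) ≠ ((-1 : ℝ) : EReal) := by exact_mod_cast hy₁.ne'
  rcases lt_trichotomy j κ with h | rfl | h
  · simp only [extBox_lo_of_lt h, extBox_hi_of_lt h]
    exact ⟨h₂, h₁⟩
  · rw [extBox_lo_self, extBox_hi_self]
    cases s <;> simp only [Bool.false_eq_true, ↓reduceIte]
    exacts [⟨EReal.coe_ne_bot y, h₂⟩, ⟨h₁, EReal.coe_ne_top y⟩]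
  · simp [extBox_lo_of_gt h, extBox_hi_of_gt h]

theorem exists_generic (𝒮 : Finset (Box d)) (j : Fin d) {a b : EReal} (hab : a < b) :
    ∃ y : ℝ, a < y ∧ (y : EReal) < b ∧ Generic 𝒮 j y := by
  obtain ⟨a', ha, hab'⟩ := EReal.exists_between_coe_real hab
  obtain ⟨b', hab'', hb⟩ := EReal.exists_between_coe_real hab'
  obtain ⟨y, ⟨hay, hyb⟩, hy⟩ :=
    (Set.Ioo_infinite (EReal.coe_lt_coe_iff.1 hab'')).exists_notMem_finset
      (𝒮.image (fun B => (B.lo j).toReal) ∪ 𝒮.image (fun B => (B.hi j).toReal))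
  refine ⟨y, ha.trans (by exact_mod_cast hay), (by exact_mod_cast hyb : (y : EReal) < b').trans hb,
    fun B hB => ⟨fun h => hy ?_, fun h => hy ?_⟩⟩
  · exact Finset.mem_union_left _ (Finset.mem_image.2 ⟨B, hB, by rw [← h, EReal.toReal_coe]⟩)
  · exact Finset.mem_union_right _ (Finset.mem_image.2 ⟨B, hB, by rw [← h, EReal.toReal_coe]⟩)

theorem IsTiling.exists_generic_crosses {𝒯 : Finset (Box d)} (hT : IsTiling 𝒯) {B B' : Box d}
    (htile : B ∈ 𝒯 ∨ B' ∈ 𝒯) {j : Fin d} (hov : Overlaps B B' j) :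
    ∃ y : ℝ, -1 < y ∧ y < 1 ∧ Generic 𝒯 j y ∧ B.Crosses j y ∧ B'.Crosses j y := by
  have hbounds : max (B.lo j) (B'.lo j) < ((1 : ℝ) : EReal) ∧
      ((-1 : ℝ) : EReal) < min (B.hi j) (B'.hi j) := by
    rcases htile with hC | hC
    · exact ⟨hov.trans_le ((min_le_left _ _).trans (hT.hi_le_one hC j)),
        ((hT.neg_one_le_lo hC j).trans (le_max_left _ _)).trans_lt hov⟩
    · exact ⟨hov.trans_le ((min_le_right _ _).trans (hT.hi_le_one hC j)),
        ((hT.neg_one_le_lo hC j).trans (le_max_right _ _)).trans_lt hov⟩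
  obtain ⟨y, hay, hyb, hgen⟩ := exists_generic 𝒯 j
    (a := max (max (B.lo j) (B'.lo j)) ((-1 : ℝ) : EReal))
    (b := min (min (B.hi j) (B'.hi j)) ((1 : ℝ) : EReal))
    (max_lt (lt_min hov hbounds.1) (lt_min hbounds.2 (EReal.coe_lt_coe_iff.2 (by norm_num))))
  simp only [max_lt_iff, lt_min_iff] at hay hyb
  exact ⟨y, by exact_mod_cast hay.2, by exact_mod_cast hyb.2, hgen, ⟨hay.1.1, hyb.1.1⟩,
    ⟨hay.1.2, hyb.1.2⟩⟩

variable {𝒯 : Finset (Box (d + 1))} {j : Fin (d + 1)} {y : ℝ}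

theorem mem_withExt_sliceT_iff (hgen : Generic 𝒯 j y) (hy₁ : -1 < y) (hy₂ : y < 1)
    {C : Box d} :
    C ∈ withExt (sliceT 𝒯 j y) ↔
      ∃ B ∈ withExt 𝒯, B.Crosses j y ∧ sliceBox B j = C := by
  constructor
  · intro hC
    rcases Finset.mem_union.1 hC with hC | hC
    · obtain ⟨B, hB, rfl⟩ := Finset.mem_image.1 hC
      obtain ⟨hB, hBy⟩ := Finset.mem_filter.1 hB
      exact ⟨B, Finset.mem_union_left _ hB, hgen.crosses hB hBy, rfl⟩
    · obtain ⟨k, s, rfl⟩ := mem_extBoxes.1 hC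
      refine ⟨_, extBox_mem_withExt 𝒯 (j.succAbove k) s,
        (hgen.withExt hy₁ hy₂).crosses (extBox_mem_withExt 𝒯 _ s) ?_, sliceBox_extBox j k s⟩
      rcases (Fin.succAbove_ne j k).lt_or_gt with h | h
      · simp only [extBox_lo_of_gt h, extBox_hi_of_gt h]
        exact ⟨bot_le, le_top⟩
      · simp only [extBox_lo_of_lt h, extBox_hi_of_lt h]
        exact ⟨by exact_mod_cast hy₁.le, by exact_mod_cast hy₂.le⟩
  · rintro ⟨B, hB, hBy, rfl⟩
    rcases Finset.mem_union.1 hB with hB | hB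
    · exact Finset.mem_union_left _
        (Finset.mem_image.2 ⟨B, Finset.mem_filter.2 ⟨hB, hBy.1.le, hBy.2.le⟩, rfl⟩)
    · obtain ⟨κ, s, rfl⟩ := mem_extBoxes.1 hB
      obtain ⟨k, rfl⟩ : ∃ k, j.succAbove k = κ := Fin.exists_succAbove_eq fun h => by
        subst h
        rw [Crosses, extBox_lo_self, extBox_hi_self] at hBy
        cases s <;> simp only [Bool.false_eq_true, ↓reduceIte] at hBy
        · exact hBy.2.not_ge (by exact_mod_cast hy₁.le)
        · exact hBy.1.not_ge (by exact_mod_cast hy₂.le)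
      rw [sliceBox_extBox]
      exact Finset.mem_union_right _ (mem_extBoxes.2 ⟨k, s, rfl⟩)

theorem sliceBox_mem_withExt_sliceT (hgen : Generic 𝒯 j y) (hy₁ : -1 < y) (hy₂ : y < 1)
    {B : Box (d + 1)} (hB : B ∈ withExt 𝒯) (hBy : B.Crosses j y) :
    sliceBox B j ∈ withExt (sliceT 𝒯 j y) :=
  (mem_withExt_sliceT_iff hgen hy₁ hy₂).2 ⟨B, hB, hBy, rfl⟩

theorem IsTiling.slice (hT : IsTiling 𝒯) (hgen : Generic 𝒯 j y) (hy₁ : -1 < y)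
    (hy₂ : y < 1) : IsTiling (sliceT 𝒯 j y) := by
  have hmem : ∀ C ∈ sliceT 𝒯 j y, ∃ B ∈ 𝒯, B.Crosses j y ∧ sliceBox B j = C := fun C hC => by
    obtain ⟨B, hB, rfl⟩ := Finset.mem_image.1 hC
    obtain ⟨hB, hBy⟩ := Finset.mem_filter.1 hB
    exact ⟨B, hB, hgen.crosses hB hBy, rfl⟩
  refine ⟨fun C hC => ?_, fun C hC v hv => ?_, fun A' hA' B' hB' hAB => ?_, fun v hv => ?_⟩
  · obtain ⟨B, hB, -, rfl⟩ := hmem C hC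
    exact (hT.1 B hB).sliceBox j
  · obtain ⟨B, hB, hBy, rfl⟩ := hmem C hC
    intro l
    simpa using hT.2.1 B hB (mem_insertNth_iff.2 ⟨⟨hBy.1.le, hBy.2.le⟩, hv⟩) (j.succAbove l)
  · obtain ⟨A, hA, hAy, rfl⟩ := hmem A' hA'
    obtain ⟨B, hB, hBy, rfl⟩ := hmem B' hB'
    rw [Set.eq_empty_iff_forall_notMem]
    rintro v ⟨hvA, hvB⟩
    have := hT.2.2.1 A hA B hB (fun h => hAB (h ▸ rfl))
    exact this.subset ⟨insertNth_mem_interior_iff.2 ⟨hAy, hvA⟩,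
      insertNth_mem_interior_iff.2 ⟨hBy, hvB⟩⟩
  · have hu : j.insertNth y v ∈ cube (d + 1) := fun l => by
      rcases Fin.eq_self_or_eq_succAbove j l with rfl | ⟨k, rfl⟩
      · simpa using ⟨hy₁.le, hy₂.le⟩
      · simpa using hv k
    obtain ⟨B, hB, huB⟩ := hT.2.2.2 _ hu
    obtain ⟨hBy, hvB⟩ := mem_insertNth_iff.1 huB
    exact ⟨sliceBox B j, Finset.mem_image.2 ⟨B, Finset.mem_filter.2 ⟨hB, hBy⟩, rfl⟩, hvB⟩

theorem Proper.slice (hT : IsTiling 𝒯) (hP : Proper 𝒯) (hgen : Generic 𝒯 j y) (hy₁ : -1 < y)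
    (hy₂ : y < 1) : Proper (sliceT 𝒯 j y) := by
  intro v
  have hsub : (withExt (sliceT 𝒯 j y)).filter (·.mem v) ⊆
      ((withExt 𝒯).filter (·.mem (j.insertNth y v))).image (sliceBox · j) := by
    intro C hC
    obtain ⟨hC, hvC⟩ := Finset.mem_filter.1 hC
    obtain ⟨B, hB, hBy, rfl⟩ := (mem_withExt_sliceT_iff hgen hy₁ hy₂).1 hC
    exact Finset.mem_image.2
      ⟨B, Finset.mem_filter.2 ⟨hB, mem_insertNth_iff.2 ⟨⟨hBy.1.le, hBy.2.le⟩, hvC⟩⟩, rfl⟩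
  refine (Finset.card_le_card hsub).trans (Finset.card_image_le.trans ?_)
  refine hP.card_filter_mem_le_of_forall_crosses hT _ j fun B hB huB => ?_
  simpa using (hgen.withExt hy₁ hy₂).crosses hB (mem_insertNth_iff.1 huB).1

end Slice

section Sides

variable {d : ℕ}

@[simp]
theorem sideBox_lo_self (B : Box d) (i : Fin d) (s : Bool) :
    (sideBox B i s).lo i = if s then B.hi i else B.lo i := if_pos rfl

@[simp]
theorem sideBox_hi_self (B : Box d) (i : Fin d) (s : Bool) :
    (sideBox B i s).hi i = (sideBox B i s).lo i := by
  simp [sideBox]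

@[simp]
theorem sideBox_lo_of_ne (B : Box d) {i l : Fin d} (h : l ≠ i) (s : Bool) :
    (sideBox B i s).lo l = B.lo l := if_neg h

@[simp]
theorem sideBox_hi_of_ne (B : Box d) {i l : Fin d} (h : l ≠ i) (s : Bool) :
    (sideBox B i s).hi l = B.hi l := if_neg h

theorem sideBox_mem_sides {𝒯 : Finset (Box d)} {B : Box d} (hB : B ∈ withExt 𝒯) (i : Fin d)
    (s : Bool) : sideBox B i s ∈ sides 𝒯 :=
  Finset.mem_image.2 ⟨(B, i, s), Finset.mem_product.2 ⟨hB, Finset.mem_univ _⟩, rfl⟩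

theorem mem_sideBox_iff {B : Box d} {i : Fin d} {s : Bool} (hB : B.lo i ≤ B.hi i)
    {p : Fin d → ℝ} : (sideBox B i s).mem p ↔ B.mem p ∧ (p i : EReal) = (sideBox B i s).lo i := by
  constructor
  · intro h
    refine ⟨fun l => ?_, le_antisymm (by simpa using (h i).2) (h i).1⟩
    rcases eq_or_ne l i with rfl | hl
    · have := h l
      simp only [sideBox_lo_self, sideBox_hi_self] at this
      cases s <;> simp only [Bool.false_eq_true, ↓reduceIte] at this
      exacts [⟨this.1, this.2.trans hB⟩, ⟨hB.trans this.1, this.2⟩]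
    · simpa [hl] using h l
  · rintro ⟨h, hi⟩ l
    rcases eq_or_ne l i with rfl | hl
    · simp [hi]
    · simpa [hl] using h l

theorem exists_eq_sideBox {𝒯 : Finset (Box d)} (hT : IsTiling 𝒯) {S : Box d}
    (hS : S ∈ sides 𝒯) {i : Fin d} {x : ℝ} (hdeg : DegenAt S i x) :
    ∃ B ∈ withExt 𝒯, ∃ s, S = sideBox B i s := by
  obtain ⟨⟨B, m, s⟩, hq, rfl⟩ := Finset.mem_image.1 hS
  have hB := (Finset.mem_product.1 hq).1
  refine ⟨B, hB, s, ?_⟩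
  obtain rfl : i = m := not_not.1 fun him => by
    have := hT.fullDim hB i
    rw [← sideBox_lo_of_ne B him s, ← sideBox_hi_of_ne B him s, hdeg.1, hdeg.2] at this
    exact this.false
  rfl

theorem interDim_eq_sub_one {A B : Box d} {i : Fin d} (hi : ¬ Overlaps A B i)
    (hov : ∀ l ≠ i, Overlaps A B l) : interDim A B = d - 1 := by
  have : Finset.univ.filter (Overlaps A B) = Finset.univ.erase i := by
    ext l
    by_cases hl : l = i <;> simp_all
  rw [interDim_eq_card_filter_overlaps, this]
  simp

theorem eq_of_interDim_eq_sub_one {A B : Box d} (h : interDim A B = d - 1) {i m : Fin d}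
    (hi : ¬ Overlaps A B i) (hm : ¬ Overlaps A B m) : m = i := by
  by_contra hmi
  have hsub : Finset.univ.filter (Overlaps A B) ⊆ (Finset.univ.erase i).erase m := by
    intro l hl
    simp only [Finset.mem_filter, Finset.mem_univ, true_and] at hl
    simp only [Finset.mem_erase, Finset.mem_univ, and_true]
    exact ⟨fun h => hm (h ▸ hl), fun h => hi (h ▸ hl)⟩
  have := Finset.card_le_card hsub
  rw [← interDim_eq_card_filter_overlaps, h, Finset.card_erase_of_mem (by simpa using hmi),
    Finset.card_erase_of_mem (Finset.mem_univ _), Finset.card_univ, Fintype.card_fin] at this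
  have := i.pos
  omega

theorem linked_sideBox_of_overlaps {B B' : Box d} {i : Fin d} {s s' : Bool} {p : Fin d → ℝ}
    (hp : (sideBox B i s).mem p) (hp' : (sideBox B' i s').mem p)
    (hov : ∀ l ≠ i, Overlaps B B' l) : Linked (sideBox B i s) (sideBox B' i s') := by
  refine ⟨⟨p, hp, hp'⟩,
    interDim_eq_sub_one (not_overlaps_of_hi_le_lo_left (sideBox_hi_self B i s).le) ?_⟩
  intro l hl
  simpa [Overlaps, hl] using hov l hl

theorem Linked.symm {S S' : Box d} (h : Linked S S') : Linked S' S := by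
  obtain ⟨⟨q, hq, hq'⟩, hdim⟩ := h
  refine ⟨⟨q, hq', hq⟩, ?_⟩
  rw [interDim_eq_card_filter_overlaps, ← hdim, interDim_eq_card_filter_overlaps]
  exact congrArg Finset.card (Finset.filter_congr fun l _ => ⟨Overlaps.symm, Overlaps.symm⟩)

theorem linkRel_symm {𝒯 : Finset (Box d)} {S S' : Box d} (h : linkRel 𝒯 S S') :
    linkRel 𝒯 S' S :=
  ⟨h.2.1, h.1, h.2.2.symm⟩

instance {𝒯 : Finset (Box d)} : Std.Symm (linkRel 𝒯) := ⟨fun _ _ => linkRel_symm⟩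

end Sides

section Separations

variable {d : ℕ} {𝒯 : Finset (Box d)}

theorem DegenAt.of_linkRel {S T : Box d} {i : Fin d} {x : ℝ} (hdeg : DegenAt S i x)
    (h : linkRel 𝒯 S T) : DegenAt T i x := by
  obtain ⟨-, hTs, ⟨q, hqS, hqT⟩, hdim⟩ := h
  obtain ⟨⟨C, m, t⟩, -, rfl⟩ := Finset.mem_image.1 hTs
  obtain rfl : m = i := eq_of_interDim_eq_sub_one hdim
    (not_overlaps_of_hi_le_lo_left (hdeg.2.trans hdeg.1.symm).le)
    (not_overlaps_of_hi_le_lo_right (sideBox_hi_self C m t).le)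
  have hqS' : (q m : EReal) = x := le_antisymm (hdeg.2 ▸ (hqS m).2) (hdeg.1 ▸ (hqS m).1)
  have hqT' : (q m : EReal) = (sideBox C m t).lo m :=
    le_antisymm ((hqT m).2.trans (sideBox_hi_self C m t).le) (hqT m).1
  exact ⟨hqT'.symm.trans hqS', (sideBox_hi_self C m t).trans (hqT'.symm.trans hqS')⟩

theorem DegenAt.of_reflTransGen {S T : Box d} {i : Fin d} {x : ℝ} (hdeg : DegenAt S i x)
    (h : Relation.ReflTransGen (linkRel 𝒯) S T) : DegenAt T i x := by
  induction h with
  | refl => exact hdeg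
  | tail _ hlink ih => exact ih.of_linkRel hlink

theorem mem_sides_of_reflTransGen {S T : Box d} (hS : S ∈ sides 𝒯)
    (h : Relation.ReflTransGen (linkRel 𝒯) S T) : T ∈ sides 𝒯 := by
  induction h with
  | refl => exact hS
  | tail _ hlink => exact hlink.2.1

theorem le_and_eq_one_or_eq_neg_one_of_sideBox_extBox_lo_eq {κ i : Fin d} {sκ s₀ : Bool} {x : ℝ}
    (h : (sideBox (extBox d κ sκ) i s₀).lo i = x) : i ≤ κ ∧ (x = 1 ∨ x = -1) := by
  rw [sideBox_lo_self] at h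
  rcases lt_trichotomy κ i with hκ | rfl | hκ
  · cases s₀ <;> simp [extBox_lo_of_gt hκ, extBox_hi_of_gt hκ] at h
  · refine ⟨le_rfl, ?_⟩
    cases s₀ <;> cases sκ <;>
      simp only [extBox_lo_self, extBox_hi_self, Bool.false_eq_true, ↓reduceIte,
        EReal.bot_ne_coe, EReal.top_ne_coe] at h
    · exact Or.inl (by exact_mod_cast h.symm)
    · exact Or.inr (by exact_mod_cast h.symm)
  · refine ⟨hκ.le, ?_⟩
    cases s₀ <;> simp only [Bool.false_eq_true, ↓reduceIte, extBox_lo_of_lt hκ,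
      extBox_hi_of_lt hκ] at h
    · exact Or.inr (by exact_mod_cast h.symm)
    · exact Or.inl (by exact_mod_cast h.symm)

theorem linkRel_sideBox_extBox {κ i : Fin d} {sκ s₀ : Bool} {p : Fin d → ℝ}
    (hp : (sideBox (extBox d κ sκ) i s₀).mem p) :
    linkRel 𝒯 (sideBox (extBox d κ sκ) i s₀)
      (sideBox (extBox d i (decide (0 < p i))) i (!decide (0 < p i))) := by
  set s := decide (0 < p i)
  obtain ⟨hpκ, hpi⟩ := (mem_sideBox_iff (extBox_fullDim κ sκ i).le).1 hp
  obtain ⟨hiκ, hx⟩ := le_and_eq_one_or_eq_neg_one_of_sideBox_extBox_lo_eq hpi.symm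
  have hstar : (sideBox (extBox d i s) i (!s)).mem p := by
    refine (mem_sideBox_iff (extBox_fullDim i s i).le).2 ⟨mem_extBox_iff.2
      ⟨fun j hj => (mem_extBox_iff.1 hpκ).1 j (hj.trans_le hiκ), ?_⟩, ?_⟩ <;>
      rcases hx with hx | hx <;> simp [s, hx]
  refine ⟨sideBox_mem_sides (extBox_mem_withExt 𝒯 κ sκ) i s₀,
    sideBox_mem_sides (extBox_mem_withExt 𝒯 i s) i (!s),
    linked_sideBox_of_overlaps hp hstar fun l hl => ?_⟩
  rcases hl.lt_or_gt with hl | hl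
  · refine overlaps_of_le ?_ ?_ (extBox_fullDim i s l) <;>
      simp [extBox_lo_of_lt hl, extBox_hi_of_lt hl, extBox_lo_of_lt (hl.trans_le hiκ),
        extBox_hi_of_lt (hl.trans_le hiκ)]
  · refine (overlaps_of_le ?_ ?_ (extBox_fullDim κ sκ l)).symm <;>
      simp [extBox_lo_of_gt hl, extBox_hi_of_gt hl]

theorem reflTransGen_linkRel_sideBox_extBox {κ κ' i : Fin d} {sκ sκ' s₀ s₀' : Bool}
    (h : Intersects (sideBox (extBox d κ sκ) i s₀) (sideBox (extBox d κ' sκ') i s₀')) :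
    Relation.ReflTransGen (linkRel 𝒯) (sideBox (extBox d κ sκ) i s₀)
      (sideBox (extBox d κ' sκ') i s₀') := by
  obtain ⟨p, hp, hp'⟩ := h
  exact .tail (.single (linkRel_sideBox_extBox hp)) (linkRel_symm (linkRel_sideBox_extBox hp'))

end Separations

section Lift

variable {d : ℕ}

theorem sliceBox_sideBox (B : Box (d + 1)) (j : Fin (d + 1)) (k : Fin d) (s : Bool) :
    sliceBox (sideBox B (j.succAbove k) s) j = sideBox (sliceBox B j) k s := by
  ext l <;> simp [sliceBox, sideBox]

theorem mem_sideBox_sliceBox_removeNth {B : Box (d + 1)} {j : Fin (d + 1)} {k : Fin d}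
    {s : Bool} {p : Fin (d + 1) → ℝ} (hp : (sideBox B (j.succAbove k) s).mem p) :
    (sideBox (sliceBox B j) k s).mem (j.removeNth p) :=
  sliceBox_sideBox B j k s ▸ fun l => hp (j.succAbove l)

theorem interDim_eq_add_interDim_sliceBox (X Y : Box (d + 1)) (j : Fin (d + 1)) :
    interDim X Y = (if Overlaps X Y j then 1 else 0) + interDim (sliceBox X j) (sliceBox Y j) := by
  rw [interDim, interDim, Finset.card_filter, Finset.card_filter, Fin.sum_univ_succAbove _ j]
  rfl

variable {𝒯 : Finset (Box (d + 1))} {j : Fin (d + 1)} {y : ℝ}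

/-- `L = S(B, j.succAbove k, s)` for a box `B` of `T ∪ T_ext` crossing `H^(j)_y`, and `C` is the
side `S(B|^(j)_y, k, s)` of the slice `T|^(j)_y`. -/
def IsLift (𝒯 : Finset (Box (d + 1))) (j : Fin (d + 1)) (y : ℝ) (C : Box d) (L : Box (d + 1)) :
    Prop :=
  ∃ B ∈ withExt 𝒯, B.Crosses j y ∧
    ∃ k s, L = sideBox B (j.succAbove k) s ∧ C = sideBox (sliceBox B j) k s

namespace IsLift

variable {C : Box d} {L : Box (d + 1)}

theorem sliceBox_eq (h : IsLift 𝒯 j y C L) : sliceBox L j = C := by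
  obtain ⟨B, -, -, k, s, rfl, rfl⟩ := h
  exact sliceBox_sideBox B j k s

theorem crosses (h : IsLift 𝒯 j y C L) : L.Crosses j y := by
  obtain ⟨B, -, hBy, k, s, rfl, -⟩ := h
  simpa [Crosses, Fin.succAbove_ne j k |>.symm] using hBy

theorem mem_sides (h : IsLift 𝒯 j y C L) : L ∈ sides 𝒯 := by
  obtain ⟨B, hB, -, k, s, rfl, -⟩ := h
  exact sideBox_mem_sides hB _ _

theorem insertNth_mem (h : IsLift 𝒯 j y C L) {v : Fin d → ℝ} (hv : C.mem v) :
    L.mem (j.insertNth y v) :=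
  mem_insertNth_iff.2 ⟨⟨h.crosses.1.le, h.crosses.2.le⟩, h.sliceBox_eq ▸ hv⟩

theorem linked {C' : Box d} {L' : Box (d + 1)} (h : IsLift 𝒯 j y C L)
    (h' : IsLift 𝒯 j y C' L') (hC : Linked C C') : Linked L L' := by
  have hd : 0 < d := by
    obtain ⟨-, -, -, k, -⟩ := h
    exact k.pos
  obtain ⟨v, hv, hv'⟩ := hC.1
  refine ⟨⟨_, h.insertNth_mem hv, h'.insertNth_mem hv'⟩, ?_⟩
  have hov : Overlaps L L' j :=
    (max_lt h.crosses.1 h'.crosses.1).trans_le (le_min h.crosses.2.le h'.crosses.2.le)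
  rw [interDim_eq_add_interDim_sliceBox, h.sliceBox_eq, h'.sliceBox_eq, hC.2, if_pos hov]
  omega

end IsLift

theorem exists_isLift (hgen : Generic 𝒯 j y) (hy₁ : -1 < y) (hy₂ : y < 1) {C : Box d}
    (hC : C ∈ sides (sliceT 𝒯 j y)) : ∃ L, IsLift 𝒯 j y C L := by
  obtain ⟨⟨Q, k, s⟩, hQ, rfl⟩ := Finset.mem_image.1 hC
  obtain ⟨B, hB, hBy, rfl⟩ :=
    (mem_withExt_sliceT_iff hgen hy₁ hy₂).1 (Finset.mem_product.1 hQ).1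
  exact ⟨_, B, hB, hBy, k, s, rfl, rfl⟩

theorem linked_sideBox_self {Q : Box d} (hQ : Q.FullDim) {k : Fin d} {s : Bool}
    (hne : ∃ v, (sideBox Q k s).mem v) : Linked (sideBox Q k s) (sideBox Q k s) := by
  obtain ⟨v, hv⟩ := hne
  exact linked_sideBox_of_overlaps hv hv fun l _ => overlaps_of_le le_rfl le_rfl (hQ l)

theorem IsLift.reflTransGen (hT : IsTiling 𝒯) (hgen : Generic 𝒯 j y) (hy₁ : -1 < y)
    (hy₂ : y < 1) {C C' : Box d} (hCC' : Relation.ReflTransGen (linkRel (sliceT 𝒯 j y)) C C')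
    (hC : ∃ v, C.mem v) {L L' : Box (d + 1)} (hL : IsLift 𝒯 j y C L)
    (hL' : IsLift 𝒯 j y C' L') : Relation.ReflTransGen (linkRel 𝒯) L L' := by
  induction hCC' generalizing L' with
  | refl =>
    refine .single ⟨hL.mem_sides, hL'.mem_sides, hL.linked hL' ?_⟩
    obtain ⟨B, hB, -, k, s, -, rfl⟩ := hL
    exact linked_sideBox_self ((hT.fullDim hB).sliceBox j) hC
  | tail _ hlink ih =>
    obtain ⟨M, hM⟩ := exists_isLift hgen hy₁ hy₂ hlink.1
    exact .tail (ih hM) ⟨hM.mem_sides, hL'.mem_sides, hM.linked hL' hlink.2.2⟩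

end Lift

section Main

variable {d : ℕ} {𝒯 : Finset (Box d)}

theorem IsTiling.exists_mem_sideBox (hT : IsTiling 𝒯) {N B : Box d} (hN : N ∈ withExt 𝒯)
    (hB : B ∈ withExt 𝒯) (hNB : N ≠ B) {p : Fin d → ℝ} (hpN : N.mem p) (hpB : B.mem p)
    {i : Fin d} (hint : ∀ l ≠ i, l ∈ N.interiorCoords p) : ∃ t, (sideBox N i t).mem p := by
  obtain ⟨l, hl⟩ := hT.exists_abutsAt hN hB hNB hpN hpB
  obtain rfl : l = i := not_not.1 fun h => hl.notMem_interiorCoords_left (hint l h)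
  rcases hl with ⟨h, -⟩ | ⟨h, -⟩
  · exact ⟨true, (mem_sideBox_iff (hT.fullDim hN l).le).2 ⟨hpN, by simpa using h⟩⟩
  · exact ⟨false, (mem_sideBox_iff (hT.fullDim hN l).le).2 ⟨hpN, by simpa using h⟩⟩

theorem Proper.reflTransGen_linkRel_sideBox_of_not_overlaps (hT : IsTiling 𝒯) (hP : Proper 𝒯)
    {B B' : Box d} (hB : B ∈ withExt 𝒯) (hB' : B' ∈ withExt 𝒯) {i : Fin d} {s s' : Bool}
    {p : Fin d → ℝ} (hp : (sideBox B i s).mem p) (hp' : (sideBox B' i s').mem p) {l₀ : Fin d}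
    (hl₀ : l₀ ≠ i) (hnov : ∀ l ≠ i, ¬ Overlaps B B' l) :
    Relation.ReflTransGen (linkRel 𝒯) (sideBox B i s) (sideBox B' i s') := by
  obtain ⟨hpB, hpi⟩ := (mem_sideBox_iff (hT.fullDim hB i).le).1 hp
  obtain ⟨hpB', hpi'⟩ := (mem_sideBox_iff (hT.fullDim hB' i).le).1 hp'
  have habut : ∀ l ≠ i, AbutsAt B B' p l := fun l hl =>
    abutsAt_of_not_overlaps (hT.fullDim hB) (hT.fullDim hB') hpB hpB' (hnov l hl)
  have hend : ∀ {C : Box d} {t : Bool}, (p i : EReal) = (sideBox C i t).lo i →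
      (p i : EReal) = C.lo i ∨ (p i : EReal) = C.hi i := by
    intro C t h
    cases t <;> simp_all
  obtain ⟨N, hN, hpN, hNint⟩ := hP.exists_mem_interiorCoords_of_abutsAt hT hB hB'
    ((habut l₀ hl₀).ne (hT.fullDim hB)) hpB hpB' (hend hpi) (hend hpi') habut
  obtain ⟨t, hpt⟩ := hT.exists_mem_sideBox hN hB
    (fun h => (habut l₀ hl₀).notMem_interiorCoords_left (h ▸ hNint l₀ hl₀)) hpN hpB hNint
  have hlink : ∀ {C : Box d} {u : Bool}, C ∈ withExt 𝒯 → (sideBox C i u).mem p →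
      linkRel 𝒯 (sideBox C i u) (sideBox N i t) := fun hC hpC =>
    ⟨sideBox_mem_sides hC i _, sideBox_mem_sides hN i t,
      linked_sideBox_of_overlaps hpC hpt fun l hl => overlaps_of_mem_of_mem_interiorCoords
        (hT.fullDim hC) ((mem_sideBox_iff (hT.fullDim hC i).le).1 hpC).1 (hNint l hl)⟩
  exact .tail (.single (hlink hB hp)) (linkRel_symm (hlink hB' hp'))

theorem Proper.reflTransGen_linkRel_sideBox (hT : IsTiling 𝒯) (hP : Proper 𝒯) {B B' : Box d}
    (hB : B ∈ withExt 𝒯) (hB' : B' ∈ withExt 𝒯) {i : Fin d} {s s' : Bool}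
    (h : Intersects (sideBox B i s) (sideBox B' i s')) :
    Relation.ReflTransGen (linkRel 𝒯) (sideBox B i s) (sideBox B' i s') := by
  induction d with
  | zero => exact i.elim0
  | succ d IH =>
  obtain ⟨p, hp, hp'⟩ := h
  by_cases hext : B ∈ extBoxes (d + 1) ∧ B' ∈ extBoxes (d + 1)
  · obtain ⟨κ, sκ, rfl⟩ := mem_extBoxes.1 hext.1
    obtain ⟨κ', sκ', rfl⟩ := mem_extBoxes.1 hext.2
    exact reflTransGen_linkRel_sideBox_extBox ⟨p, hp, hp'⟩
  have htile : B ∈ 𝒯 ∨ B' ∈ 𝒯 := by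
    simp only [withExt, Finset.mem_union] at hB hB'
    tauto
  by_cases hov : ∀ l ≠ i, Overlaps B B' l
  · exact .single ⟨sideBox_mem_sides hB i s, sideBox_mem_sides hB' i s',
      linked_sideBox_of_overlaps hp hp' hov⟩
  obtain ⟨l₀, hl₀, -⟩ := not_forall₂.1 hov
  by_cases hj : ∃ j ≠ i, Overlaps B B' j
  swap
  · push Not at hj
    exact hP.reflTransGen_linkRel_sideBox_of_not_overlaps hT hB hB' hp hp' hl₀ hj
  obtain ⟨j, hji, hj⟩ := hj
  obtain ⟨y, hy₁, hy₂, hgen, hBy, hB'y⟩ := hT.exists_generic_crosses htile hj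
  obtain ⟨k, rfl⟩ := Fin.exists_succAbove_eq hji.symm
  have hv := mem_sideBox_sliceBox_removeNth hp
  have hslice := IH (hT.slice hgen hy₁ hy₂) (hP.slice hT hgen hy₁ hy₂)
    (sliceBox_mem_withExt_sliceT hgen hy₁ hy₂ hB hBy)
    (sliceBox_mem_withExt_sliceT hgen hy₁ hy₂ hB' hB'y) ⟨_, hv, mem_sideBox_sliceBox_removeNth hp'⟩
  exact IsLift.reflTransGen hT hgen hy₁ hy₂ hslice ⟨_, hv⟩ ⟨B, hB, hBy, k, s, rfl, rfl⟩
    ⟨B', hB', hB'y, k, s', rfl, rfl⟩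

end Main

/-- In a proper `d`-tiling `T`, two distinct separations that
are coplanar (degenerate in the same dimension `i`, contained in the same
hyperplane `H^(i)_x`) do not intersect. -/
theorem stmt12 (d : ℕ) (𝒯 : Finset (Box d)) (hT : IsTiling 𝒯) (hP : Proper 𝒯)
    (S₀ S₁ : Box d) (hS₀ : S₀ ∈ sides 𝒯) (hS₁ : S₁ ∈ sides 𝒯)
    (hdistinct : ¬ Relation.ReflTransGen (linkRel 𝒯) S₀ S₁)
    (i : Fin d) (x : ℝ) (h₀ : DegenAt S₀ i x) (h₁ : DegenAt S₁ i x) :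
    sepSet 𝒯 S₀ ∩ sepSet 𝒯 S₁ = ∅ := by
  refine Set.eq_empty_of_forall_notMem fun p ⟨hp₀, hp₁⟩ => hdistinct ?_
  simp only [sepSet, sepClass, Set.mem_ofPred_eq, Set.mem_iUnion] at hp₀ hp₁
  obtain ⟨S, hS, hpS⟩ := hp₀
  obtain ⟨S', hS', hpS'⟩ := hp₁
  obtain ⟨B, hB, s, rfl⟩ :=
    exists_eq_sideBox hT (mem_sides_of_reflTransGen hS₀ hS) (h₀.of_reflTransGen hS)
  obtain ⟨B', hB', s', rfl⟩ :=
    exists_eq_sideBox hT (mem_sides_of_reflTransGen hS₁ hS') (h₁.of_reflTransGen hS')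
  have hSS' := hP.reflTransGen_linkRel_sideBox hT hB hB' ⟨p, hpS, hpS'⟩
  exact (hS.trans hSS').trans (Std.Symm.symm _ _ hS')

end
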